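/- Let k be a field of characteristic ≠ 2, let A ∈ 𝒞(k), and let ℓ ⊆ A be a Kleinian subfield of A (so ℓ is a quadratic field extension of k). Then there exists an ℓ-admissible triple c ∈ k³ and a k-algebra isomorphism A(ℓ, c) → A. -/

import Mathlib

/-!
Let `α, β` be the Kleinian pair with `ι(ℓ)` the fixed space of `β`. Since `α` commutes with `β`,
it preserves the `(-1)`-eigenspace of `β` and has an eigenvector `v ≠ 0` there, with eigenvalue
`±1`. The map `(x, y) ↦ ι x + v · ι y` is injective, because `β` acts on it by `(x, y) ↦ (x, -y)`
and `char k ≠ 2`, hence bijective by dimension count. Consequently `α` restricts to a nontrivial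
automorphism of `ℓ`, which must be `σ`. Define `F, H : ℓ → ℓ` by `ι x · v = v · ι (F x)` and
`(v · ι y) · v = ι (H y)`; applying `α` shows that both commute with `σ`, so they have the form
`w ↦ a w + b σ(w)` with `a, b ∈ k`, and `F 1 = 1`. As `ι(ℓ)` lies in the right nucleus, the
multiplication of `A` transported to `ℓ × ℓ` is that of `A(ℓ, c)` for
`F = (1 - c₁) + c₁ σ` and `H = c₂ + c₃ σ`. Finally `(x, y) · (F x, -y) = (q_c(x, y), 0)`, so the
absence of zero divisors in `A` makes `c` admissible.
-/

open Module Function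

variable {k ℓ : Type}

def qc [Field k] [Field ℓ] [Algebra k ℓ] (σ : ℓ ≃ₐ[k] ℓ) (c : k × k × k) (x y : ℓ) : ℓ :=
  (1 - algebraMap k ℓ c.1) * x ^ 2 + algebraMap k ℓ c.1 * (x * σ x)
    - algebraMap k ℓ c.2.1 * y ^ 2 - algebraMap k ℓ c.2.2 * (y * σ y)

def IsAdmissibleTriple [Field k] [Field ℓ] [Algebra k ℓ] (σ : ℓ ≃ₐ[k] ℓ)
    (c : k × k × k) : Prop :=
  ∀ x y : ℓ, qc σ c x y = 0 → x = 0 ∧ y = 0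

/-- The multiplication of `A(ℓ, c)`. -/
def Amul [Field k] [Field ℓ] [Algebra k ℓ] (σ : ℓ ≃ₐ[k] ℓ) (c : k × k × k)
    (p q : ℓ × ℓ) : ℓ × ℓ :=
  (p.1 * q.1 + (algebraMap k ℓ c.2.1 * p.2 + algebraMap k ℓ c.2.2 * σ p.2) * q.2,
   p.2 * q.1 + ((1 - algebraMap k ℓ c.1) * p.1 + algebraMap k ℓ c.1 * σ p.1) * q.2)

def IsKleinPair [Field k] {A : Type} [AddCommGroup A] [Module k A]
    (mul : A →ₗ[k] A →ₗ[k] A) (α β : A ≃ₗ[k] A) : Prop :=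
  (∀ x y : A, α (mul x y) = mul (α x) (α y)) ∧
  (∀ x y : A, β (mul x y) = mul (β x) (β y)) ∧
  (∀ x : A, α (α x) = x) ∧ (∀ x : A, β (β x) = x) ∧
  (∀ x : A, α (β x) = β (α x)) ∧
  α ≠ LinearEquiv.refl k A ∧ β ≠ LinearEquiv.refl k A ∧ α ≠ β

def rightNucleusSet [Field k] {A : Type} [AddCommGroup A] [Module k A]
    (mul : A →ₗ[k] A →ₗ[k] A) : Set A :=
  {z | ∀ x y : A, mul (mul x y) z = mul x (mul y z)}

section QuadraticExtension

variable [Field k] [Field ℓ] [Algebra k ℓ]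

theorem linearMap_ext_of_notMem_range (hquad : finrank k ℓ = 2) {x : ℓ}
    (hx : x ∉ Set.range (algebraMap k ℓ)) {f g : ℓ →ₗ[k] ℓ} (h1 : f 1 = g 1)
    (hfx : f x = g x) : f = g := by
  have hli : LinearIndependent k ![(1 : ℓ), x] :=
    (LinearIndependent.pair_iff' one_ne_zero).2 fun a ha =>
      hx ⟨a, by rw [Algebra.algebraMap_eq_smul_one, ha]⟩
  refine LinearMap.ext_on_range (hli.span_eq_top_of_card_eq_finrank (by simp [hquad])) ?_
  intro i
  fin_cases i <;> simp [h1, hfx]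

theorem mem_range_algebraMap_of_apply_eq_self (hquad : finrank k ℓ = 2) {σ : ℓ ≃ₐ[k] ℓ}
    (hσ : ∃ x, σ x ≠ x) {a : ℓ} (ha : σ a = a) : a ∈ Set.range (algebraMap k ℓ) := by
  by_contra h
  obtain ⟨x, hx⟩ := hσ
  have hid : σ.toLinearMap = LinearMap.id :=
    linearMap_ext_of_notMem_range hquad h (by simp) (by simpa using ha)
  exact hx (by simpa using LinearMap.congr_fun hid x)

theorem algHom_eq_of_exists_apply_ne (hquad : finrank k ℓ = 2) {σ τ : ℓ →ₐ[k] ℓ}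
    (hσ : ∃ x, σ x ≠ x) (hτ : ∃ x, τ x ≠ x) : τ = σ := by
  have := Module.finite_of_finrank_eq_succ hquad
  by_contra hne
  have h3 : 2 < Fintype.card (ℓ →ₐ[k] ℓ) := by
    obtain ⟨x, hx⟩ := hσ
    obtain ⟨y, hy⟩ := hτ
    exact Fintype.two_lt_card_iff.2 ⟨AlgHom.id k ℓ, σ, τ, fun h => hx (by simp [← h]),
      fun h => hy (by simp [← h]), Ne.symm hne⟩
  exact (AlgHom.card_le.trans_eq hquad).not_gt h3

theorem involutive_of_exists_apply_ne (hquad : finrank k ℓ = 2) {σ : ℓ ≃ₐ[k] ℓ}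
    (hσ : ∃ x, σ x ≠ x) : Involutive σ := by
  by_contra h
  obtain ⟨x, hx⟩ := hσ
  simp only [Involutive, not_forall] at h
  have hσσ := algHom_eq_of_exists_apply_ne hquad (σ := σ.toAlgHom)
    (τ := σ.toAlgHom.comp σ.toAlgHom) ⟨x, hx⟩ h
  exact hx (σ.injective (by simpa using AlgHom.congr_fun hσσ x))

theorem exists_eq_mul_add_mul_apply (hquad : finrank k ℓ = 2) {σ : ℓ ≃ₐ[k] ℓ}
    {x : ℓ} (hx : σ x ≠ x) (f : ℓ →ₗ[k] ℓ) : ∃ a b : ℓ, ∀ w, f w = a * w + b * σ w := by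
  have hd : x - σ x ≠ 0 := sub_ne_zero.2 (Ne.symm hx)
  -- `a` and `b = f 1 - a` solve `a + b = f 1` and `a * x + b * σ x = f x`.
  set a := (f x - f 1 * σ x) / (x - σ x)
  refine ⟨a, f 1 - a, fun w => LinearMap.congr_fun (f := f)
    (g := a • LinearMap.id + (f 1 - a) • σ.toLinearMap) ?_ w⟩
  refine linearMap_ext_of_notMem_range hquad (x := x) ?_ (by simp) ?_
  · rintro ⟨c, rfl⟩
    exact hx (σ.commutes c)
  · simp only [LinearMap.add_apply, LinearMap.smul_apply, LinearMap.id_apply,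
      AlgEquiv.toLinearMap_apply, smul_eq_mul, a]
    field_simp
    ring

theorem exists_eq_algebraMap_mul_add_of_commute (hquad : finrank k ℓ = 2) {σ : ℓ ≃ₐ[k] ℓ}
    (hσ : ∃ x, σ x ≠ x) (f : ℓ →ₗ[k] ℓ) (hf : Function.Commute f σ) :
    ∃ a b : k, ∀ w, f w = algebraMap k ℓ a * w + algebraMap k ℓ b * σ w := by
  obtain ⟨x, hx⟩ := hσ
  obtain ⟨a, b, hab⟩ := exists_eq_mul_add_mul_apply hquad hx f
  have hσσ := involutive_of_exists_apply_ne hquad ⟨x, hx⟩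
  have h1 := hf 1
  have hx' := hf x
  simp only [hab, map_add, map_mul, map_one, hσσ x, mul_one] at h1 hx'
  have ha : σ a = a := by
    have h : (σ a - a) * (σ x - x) = 0 := by linear_combination x * h1 - hx'
    exact sub_eq_zero.1 ((mul_eq_zero.1 h).resolve_right (sub_ne_zero.2 hx))
  have hb : σ b = b := by linear_combination -h1 - ha
  obtain ⟨a, rfl⟩ := mem_range_algebraMap_of_apply_eq_self hquad ⟨x, hx⟩ ha
  obtain ⟨b, rfl⟩ := mem_range_algebraMap_of_apply_eq_self hquad ⟨x, hx⟩ hb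
  exact ⟨a, b, hab⟩

theorem exists_eq_one_sub_mul_add_of_commute (hquad : finrank k ℓ = 2) {σ : ℓ ≃ₐ[k] ℓ}
    (hσ : ∃ x, σ x ≠ x) (f : ℓ →ₗ[k] ℓ) (hf : Function.Commute f σ) (h1 : f 1 = 1) :
    ∃ c : k, ∀ w, f w = (1 - algebraMap k ℓ c) * w + algebraMap k ℓ c * σ w := by
  obtain ⟨a, b, hab⟩ := exists_eq_algebraMap_mul_add_of_commute hquad hσ f hf
  have ha : algebraMap k ℓ a = 1 - algebraMap k ℓ b := by
    have h := hab 1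
    rw [h1, map_one, mul_one, mul_one] at h
    linear_combination -h
  exact ⟨b, fun w => by rw [hab, ha]⟩

end QuadraticExtension

section Amul

variable [Field k] [Field ℓ] [Algebra k ℓ]

theorem Amul_mk_neg (σ : ℓ ≃ₐ[k] ℓ) (c : k × k × k) (x y : ℓ) :
    Amul σ c (x, y) ((1 - algebraMap k ℓ c.1) * x + algebraMap k ℓ c.1 * σ x, -y) =
      (qc σ c x y, 0) := by
  simp only [Amul, qc]
  ext <;> ring

theorem isAdmissibleTriple_of_Amul_eq_zero {σ : ℓ ≃ₐ[k] ℓ} {c : k × k × k}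
    (h : ∀ p q, Amul σ c p q = 0 → p = 0 ∨ q = 0) : IsAdmissibleTriple σ c := by
  intro x y hq
  rcases h _ _ ((Amul_mk_neg σ c x y).trans (by rw [hq]; rfl)) with hxy | hxy
  · exact Prod.ext_iff.1 hxy
  · obtain ⟨hFx, hy⟩ := Prod.mk_eq_zero.1 hxy
    have h01 : Amul σ c (x, 0) (0, 1) = 0 := by simp [Amul, hFx]
    refine ⟨?_, neg_eq_zero.1 hy⟩
    simpa using (h _ _ h01).resolve_right (by simp)

end Amul

theorem LinearMap.exists_apply_eq_of_forall_mem_range {K V W U : Type*} [Field K]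
    [AddCommGroup V] [Module K V] [AddCommGroup W] [Module K W] [AddCommGroup U] [Module K U]
    {g : V →ₗ[K] W} (hg : Injective g) {h : U →ₗ[K] W} (hh : ∀ u, h u ∈ Set.range g) :
    ∃ t : U →ₗ[K] V, ∀ u, g (t u) = h u := by
  obtain ⟨g', hg'⟩ := g.exists_leftInverse_of_injective (LinearMap.ker_eq_bot.2 hg)
  refine ⟨g' ∘ₗ h, fun u => ?_⟩
  obtain ⟨v, hv⟩ := hh u
  rw [LinearMap.comp_apply, ← hv, ← LinearMap.comp_apply g', hg', LinearMap.id_apply]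

section Doubling

variable [Field k] [Field ℓ] [Algebra k ℓ] {A : Type} [AddCommGroup A] [Module k A]
  (mul : A →ₗ[k] A →ₗ[k] A) (ι : ℓ →ₗ[k] A) (v : A)

def doublingMap : ℓ × ℓ →ₗ[k] A :=
  ι.coprod (mul v ∘ₗ ι)

variable {mul ι v}

@[simp]
theorem doublingMap_apply (p : ℓ × ℓ) : doublingMap mul ι v p = ι p.1 + mul v (ι p.2) :=
  rfl

theorem map_doublingMap {γ : A →ₗ[k] A} {τ : ℓ → ℓ} {ε : k}
    (hγ : ∀ a b, γ (mul a b) = mul (γ a) (γ b)) (hγι : ∀ x, γ (ι x) = ι (τ x))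
    (hγv : γ v = ε • v) (p : ℓ × ℓ) :
    γ (doublingMap mul ι v p) = doublingMap mul ι v (τ p.1, ε • τ p.2) := by
  simp [hγ, hγι, hγv]

theorem doublingMap_injective (h2 : (2 : k) ≠ 0) (hι : Injective ι) (hv : Injective (mul v))
    {β : A →ₗ[k] A} (hβ : ∀ a b, β (mul a b) = mul (β a) (β b)) (hβι : ∀ x, β (ι x) = ι x)
    (hβv : β v = -v) : Injective (doublingMap mul ι v) := by
  rw [injective_iff_map_eq_zero]
  rintro ⟨x, y⟩ h
  have hβp := map_doublingMap (τ := id) hβ hβι (hβv.trans (neg_one_smul k v).symm) (x, y)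
  rw [h, map_zero] at hβp
  simp only [doublingMap_apply, id, neg_one_smul, map_neg] at h hβp
  have h2x : (2 : k) • ι x = 0 := by linear_combination (norm := module) h - hβp
  have hx : x = 0 := (map_eq_zero_iff ι hι).1 ((smul_eq_zero.1 h2x).resolve_left h2)
  rw [hx, map_zero, zero_add, ← map_zero (mul v), hv.eq_iff, map_eq_zero_iff ι hι] at h
  simp [hx, h]

theorem doublingMap_bijective (hquad : finrank k ℓ = 2) (h4 : finrank k A = 4)
    (h2 : (2 : k) ≠ 0) (hι : Injective ι) (hv : Injective (mul v))
    {β : A →ₗ[k] A} (hβ : ∀ a b, β (mul a b) = mul (β a) (β b)) (hβι : ∀ x, β (ι x) = ι x)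
    (hβv : β v = -v) : Bijective (doublingMap mul ι v) := by
  have := Module.finite_of_finrank_eq_succ hquad
  have := Module.finite_of_finrank_eq_succ h4
  have hinj := doublingMap_injective h2 hι hv hβ hβι hβv
  refine ⟨hinj, (LinearMap.injective_iff_surjective_of_finrank_eq_finrank ?_).1 hinj⟩
  rw [Module.finrank_prod, hquad, h4]

theorem mem_range_of_apply_eq_neg (h2 : (2 : k) ≠ 0) (hΦ : Bijective (doublingMap mul ι v))
    {β : A →ₗ[k] A} (hβ : ∀ a b, β (mul a b) = mul (β a) (β b)) (hβι : ∀ x, β (ι x) = ι x)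
    (hβv : β v = -v) {a : A} (ha : β a = -a) : a ∈ Set.range (mul v ∘ₗ ι) := by
  obtain ⟨⟨x, y⟩, rfl⟩ := hΦ.2 a
  have hβp := map_doublingMap (τ := id) hβ hβι (hβv.trans (neg_one_smul k v).symm) (x, y)
  rw [ha, ← map_neg] at hβp
  have hx := congrArg Prod.fst (hΦ.1 hβp)
  simp only [Prod.fst_neg, id] at hx
  replace hx : (2 : k) • x = 0 := by linear_combination (norm := module) -hx
  rw [(smul_eq_zero.1 hx).resolve_left h2]
  exact ⟨y, by simp⟩

end Doubling

section Kleinian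

variable [Field k] {A : Type} [AddCommGroup A] [Module k A] {mul : A →ₗ[k] A →ₗ[k] A}
  {α β : A ≃ₗ[k] A}

theorem map_one_of_surjective {one : A} (hone : ∀ x, mul one x = x ∧ mul x one = x)
    {γ : A → A} (hγ : Surjective γ) (hγmul : ∀ a b, γ (mul a b) = mul (γ a) (γ b)) :
    γ one = one := by
  have hleft : ∀ y, mul (γ one) y = y := fun y => by
    obtain ⟨x, rfl⟩ := hγ y
    rw [← hγmul, (hone x).1]
  exact (hone _).2.symm.trans (hleft one)

theorem IsKleinPair.exists_eigenvector (hKP : IsKleinPair mul α β) :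
    ∃ (v : A) (ε : k), v ≠ 0 ∧ β v = -v ∧ ε * ε = 1 ∧ α v = ε • v := by
  obtain ⟨-, -, hα2, hβ2, hαβ, -, hβne, -⟩ := hKP
  obtain ⟨u, hu⟩ : ∃ u, β u ≠ u := by
    by_contra! h
    exact hβne (LinearEquiv.ext h)
  set w := u - β u
  have hβw : β w = -w := by simp [w, hβ2]
  by_cases h : w + α w = 0
  · exact ⟨w, -1, sub_ne_zero.2 hu.symm, hβw, by norm_num,
      by rw [neg_one_smul]; exact eq_neg_of_add_eq_zero_right h⟩
  · refine ⟨w + α w, 1, h, ?_, one_mul 1, ?_⟩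
    · rw [map_add, hβw, ← hαβ, hβw, map_neg, neg_add]
    · rw [map_add, hα2, one_smul, add_comm]

theorem IsKleinPair.exists_apply_ne [Field ℓ] [Algebra k ℓ] {ι : ℓ →ₗ[k] A} {v : A} {ε : k}
    (hKP : IsKleinPair mul α β) (hΦ : Surjective (doublingMap mul ι v))
    (hβι : ∀ x, β (ι x) = ι x) (hβv : β v = -v) (hε : ε * ε = 1) (hαv : α v = ε • v) :
    ∃ x, α (ι x) ≠ ι x := by
  -- otherwise `α` would be the identity or `β`, according to the sign `ε`
  obtain ⟨hα, hβ, -, -, -, hαne, -, hαβ⟩ := hKP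
  by_contra! hid
  have hαΦ := map_doublingMap (γ := α.toLinearMap) (τ := id) hα hid hαv
  have hβΦ := map_doublingMap (γ := β.toLinearMap) (τ := id) hβ hβι
    (hβv.trans (neg_one_smul k v).symm)
  rcases mul_self_eq_one_iff.1 hε with rfl | rfl
  · exact hαne (LinearEquiv.ext fun a => by obtain ⟨p, rfl⟩ := hΦ a; simpa using hαΦ p)
  · exact hαβ (LinearEquiv.ext fun a => by
      obtain ⟨p, rfl⟩ := hΦ a
      exact (hαΦ p).trans (hβΦ p).symm)

end Kleinian

section KleinianSubfield

variable [Field k] [Field ℓ] [Algebra k ℓ] {A : Type} [AddCommGroup A] [Module k A]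
  {mul : A →ₗ[k] A →ₗ[k] A} {ι : ℓ →ₗ[k] A} {v : A}

theorem IsKleinPair.apply_eq_sigma {α β : A ≃ₗ[k] A} {ε : k} {one : A}
    (hquad : finrank k ℓ = 2) {σ : ℓ ≃ₐ[k] ℓ} (hσ : ∃ x, σ x ≠ x) (hι : Injective ι)
    (hι1 : ι 1 = one) (hιmul : ∀ x y, ι (x * y) = mul (ι x) (ι y))
    (hone : ∀ x, mul one x = x ∧ mul x one = x) (hKP : IsKleinPair mul α β)
    (hfixed : ∀ a, β a = a → a ∈ Set.range ι) (hβι : ∀ x, β (ι x) = ι x)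
    (hΦ : Surjective (doublingMap mul ι v)) (hβv : β v = -v) (hε : ε * ε = 1)
    (hαv : α v = ε • v) (x : ℓ) : α (ι x) = ι (σ x) := by
  have hαβ : ∀ a, α (β a) = β (α a) := hKP.2.2.2.2.1
  obtain ⟨τ, hτ⟩ := LinearMap.exists_apply_eq_of_forall_mem_range hι
    (h := α.toLinearMap ∘ₗ ι) fun x => hfixed _ (by simp [← hαβ, hβι])
  obtain ⟨x₀, hx₀⟩ := hKP.exists_apply_ne hΦ hβι hβv hε hαv
  have hα1 : α one = one := map_one_of_surjective hone α.surjective hKP.1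
  let τ' : ℓ →ₐ[k] ℓ := AlgHom.ofLinearMap τ (hι (by simp [hτ, hι1, hα1]))
    (fun x y => hι (by simp [hτ, hιmul, hKP.1]))
  have hτσ := algHom_eq_of_exists_apply_ne hquad (σ := σ.toAlgHom) (τ := τ') hσ
    ⟨x₀, fun h => hx₀ (by simpa [τ', hτ] using congrArg ι h)⟩
  simpa [τ', hτ] using congrArg ι (AlgHom.congr_fun hτσ x)

theorem exists_mul_apply_eq_mul (h2 : (2 : k) ≠ 0) (hΦ : Bijective (doublingMap mul ι v))
    (hι : Injective ι) (hv : Injective (mul v)) {β : A →ₗ[k] A}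
    (hβ : ∀ a b, β (mul a b) = mul (β a) (β b)) (hβι : ∀ x, β (ι x) = ι x) (hβv : β v = -v) :
    ∃ F : ℓ →ₗ[k] ℓ, ∀ x, mul v (ι (F x)) = mul (ι x) v :=
  LinearMap.exists_apply_eq_of_forall_mem_range (g := mul v ∘ₗ ι) (hv.comp hι)
    (h := mul.flip v ∘ₗ ι) fun x =>
      mem_range_of_apply_eq_neg h2 hΦ hβ hβι hβv (by simp [hβ, hβι, hβv])

theorem exists_apply_eq_mul_mul (hι : Injective ι) {β : A →ₗ[k] A}
    (hfixed : ∀ a, β a = a → a ∈ Set.range ι) (hβ : ∀ a b, β (mul a b) = mul (β a) (β b))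
    (hβι : ∀ x, β (ι x) = ι x) (hβv : β v = -v) :
    ∃ H : ℓ →ₗ[k] ℓ, ∀ y, ι (H y) = mul (mul v (ι y)) v :=
  LinearMap.exists_apply_eq_of_forall_mem_range hι (h := mul.flip v ∘ₗ mul v ∘ₗ ι) fun y =>
    hfixed _ (by simp [hβ, hβι, hβv])

theorem commute_of_mul_apply_eq_mul {γ : A →ₗ[k] A} {τ : ℓ → ℓ} {ε : k} (hε : ε ≠ 0)
    (hγ : ∀ a b, γ (mul a b) = mul (γ a) (γ b)) (hγι : ∀ x, γ (ι x) = ι (τ x))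
    (hγv : γ v = ε • v) (hinj : Injective (mul v ∘ₗ ι)) {F : ℓ → ℓ}
    (hF : ∀ x, mul v (ι (F x)) = mul (ι x) v) : Function.Commute F τ := fun x => by
  apply hinj
  have h := congrArg γ (hF x)
  simp only [hγ, hγι, hγv, map_smul, LinearMap.smul_apply] at h
  simpa [hF] using (smul_right_injective A hε h).symm

theorem commute_of_apply_eq_mul_mul {γ : A →ₗ[k] A} {τ : ℓ → ℓ} {ε : k} (hε : ε * ε = 1)
    (hγ : ∀ a b, γ (mul a b) = mul (γ a) (γ b)) (hγι : ∀ x, γ (ι x) = ι (τ x))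
    (hγv : γ v = ε • v) (hι : Injective ι) {H : ℓ → ℓ}
    (hH : ∀ y, ι (H y) = mul (mul v (ι y)) v) : Function.Commute H τ := fun y => by
  apply hι
  have h := congrArg γ (hH y)
  simp only [hγ, hγι, hγv, map_smul, LinearMap.smul_apply, smul_smul, hε, one_smul] at h
  rw [h, hH]

theorem apply_one_of_mul_apply_eq_mul {one : A} (hone : ∀ x, mul one x = x ∧ mul x one = x)
    (hι1 : ι 1 = one) (hinj : Injective (mul v ∘ₗ ι)) {F : ℓ → ℓ}
    (hF : ∀ x, mul v (ι (F x)) = mul (ι x) v) : F 1 = 1 :=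
  hinj (by simp [hF, hι1, hone])

theorem doublingMap_mul (hnr : Set.range ι ⊆ rightNucleusSet mul)
    (hιmul : ∀ x y, ι (x * y) = mul (ι x) (ι y)) {F H : ℓ → ℓ}
    (hF : ∀ x, mul v (ι (F x)) = mul (ι x) v) (hH : ∀ y, ι (H y) = mul (mul v (ι y)) v)
    (p q : ℓ × ℓ) : mul (doublingMap mul ι v p) (doublingMap mul ι v q) =
      doublingMap mul ι v (p.1 * q.1 + H p.2 * q.2, p.2 * q.1 + F p.1 * q.2) := by
  obtain ⟨x, y⟩ := p
  obtain ⟨w, z⟩ := q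
  have hn : ∀ a b t, mul (mul a b) (ι t) = mul a (mul b (ι t)) := fun a b t => hnr ⟨t, rfl⟩ a b
  have h12 : mul (ι x) (mul v (ι z)) = mul v (ι (F x * z)) := by
    rw [← hn, ← hF, hn, hιmul]
  have h21 : mul (mul v (ι y)) (ι w) = mul v (ι (y * w)) := by
    rw [hn, hιmul]
  have h22 : mul (mul v (ι y)) (mul v (ι z)) = ι (H y * z) := by
    rw [← hn, ← hH, hιmul]
  simp only [doublingMap_apply, map_add, LinearMap.add_apply, h12, h21, h22, hιmul]
  abel

theorem isAdmissibleTriple_of_injective {σ : ℓ ≃ₐ[k] ℓ} {c : k × k × k}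
    (hdiv : ∀ a, a ≠ 0 → Injective (mul a)) {φ : ℓ × ℓ →ₗ[k] A} (hφ : Injective φ)
    (hmul : ∀ p q, φ (Amul σ c p q) = mul (φ p) (φ q)) : IsAdmissibleTriple σ c := by
  refine isAdmissibleTriple_of_Amul_eq_zero fun p q h => ?_
  by_contra! hpq
  have hφp : φ p ≠ 0 := (map_ne_zero_iff φ hφ).2 hpq.1
  have hφq : mul (φ p) (φ q) = 0 := by rw [← hmul, h, map_zero]
  exact hpq.2 ((map_eq_zero_iff φ hφ).1 ((map_eq_zero_iff _ (hdiv _ hφp)).1 hφq))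

end KleinianSubfield

theorem exists_admissible_iso_general [Field k] [Field ℓ] [Algebra k ℓ]
    (hchar : (2 : k) ≠ 0) (hquad : finrank k ℓ = 2)
    (σ : ℓ ≃ₐ[k] ℓ) (hσ : ∃ x : ℓ, σ x ≠ x)
    (A : Type) [AddCommGroup A] [Module k A]
    (mul : A →ₗ[k] A →ₗ[k] A) (one : A)
    (h4 : finrank k A = 4)
    (hone : ∀ x : A, mul one x = x ∧ mul x one = x)
    (hdiv : ∀ a : A, a ≠ 0 →
      Function.Bijective (fun x => mul a x) ∧ Function.Bijective (fun x => mul x a))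
    (ι : ℓ →ₗ[k] A) (hinj : Function.Injective ι) (hι1 : ι 1 = one)
    (hιmul : ∀ x y : ℓ, ι (x * y) = mul (ι x) (ι y))
    (hnr : Set.range ι ⊆ rightNucleusSet mul)
    (hfix : ∃ α β : A ≃ₗ[k] A, IsKleinPair mul α β ∧ Set.range ι = {x : A | β x = x}) :
    ∃ c : k × k × k, IsAdmissibleTriple σ c ∧
      ∃ φ : ℓ × ℓ → A, Function.Bijective φ ∧
        (∀ p q : ℓ × ℓ, φ (p + q) = φ p + φ q) ∧
        (∀ (t : k) (p : ℓ × ℓ), φ (t • p) = t • φ p) ∧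
        (∀ p q : ℓ × ℓ, φ (Amul σ c p q) = mul (φ p) (φ q)) := by
  obtain ⟨α, β, hKP, hrange⟩ := hfix
  have hα := hKP.1
  have hβ := hKP.2.1
  have hβι : ∀ x, β (ι x) = ι x := fun x => hrange.subset ⟨x, rfl⟩
  have hfixed : ∀ a, β a = a → a ∈ Set.range ι := fun a ha => hrange.superset ha
  obtain ⟨v, ε, hv0, hβv, hε, hαv⟩ := hKP.exists_eigenvector
  have hv : Injective (mul v) := (hdiv v hv0).1.1
  have hΦ := doublingMap_bijective (β := β.toLinearMap) hquad h4 hchar hinj hv hβ hβι hβv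
  have hασ := hKP.apply_eq_sigma hquad hσ hinj hι1 hιmul hone hfixed hβι hΦ.2 hβv hε hαv
  obtain ⟨F, hF⟩ := exists_mul_apply_eq_mul (β := β.toLinearMap) hchar hΦ hinj hv hβ hβι hβv
  obtain ⟨H, hH⟩ := exists_apply_eq_mul_mul (β := β.toLinearMap) hinj hfixed hβ hβι hβv
  obtain ⟨c₁, hFc⟩ := exists_eq_one_sub_mul_add_of_commute hquad hσ F
    (commute_of_mul_apply_eq_mul (γ := α.toLinearMap) (left_ne_zero_of_mul_eq_one hε) hα hασ
      hαv (hv.comp hinj) hF)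
    (apply_one_of_mul_apply_eq_mul hone hι1 (hv.comp hinj) hF)
  obtain ⟨c₂, c₃, hHc⟩ := exists_eq_algebraMap_mul_add_of_commute hquad hσ H
    (commute_of_apply_eq_mul_mul (γ := α.toLinearMap) hε hα hασ hαv hinj hH)
  have hmul : ∀ p q, doublingMap mul ι v (Amul σ (c₁, c₂, c₃) p q) =
      mul (doublingMap mul ι v p) (doublingMap mul ι v q) := fun p q => by
    rw [doublingMap_mul hnr hιmul hF hH, Amul, hFc, hHc]
  exact ⟨(c₁, c₂, c₃), isAdmissibleTriple_of_injective (fun a ha => (hdiv a ha).1.1) hΦ.1 hmul,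
    _, hΦ, map_add _, map_smul _, hmul⟩

/-- Let `k` be a field of characteristic ≠ 2, `A ∈ 𝒞(k)`, and let `ℓ ⊆ A` be
a Kleinian subfield of `A` (so `ℓ` is a quadratic field extension of `k`, here embedded into
`A` by an injective `k`-linear multiplicative unital map `ι` whose range lies in the right
nucleus and equals `E_β(1)` for some Kleinian pair `(α, β)`). Then there exists an
`ℓ`-admissible triple `c ∈ k³` and a `k`-algebra isomorphism `A(ℓ, c) → A`. -/
theorem exists_admissible_iso [Field k] [Field ℓ] [Algebra k ℓ]
    (hchar : (2 : k) ≠ 0) (hquad : finrank k ℓ = 2)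
    (σ : ℓ ≃ₐ[k] ℓ) (hσ : ∃ x : ℓ, σ x ≠ x)
    (A : Type) [AddCommGroup A] [Module k A] [FiniteDimensional k A]
    (mul : A →ₗ[k] A →ₗ[k] A) (one : A)
    (h4 : finrank k A = 4)
    (hone : ∀ x : A, mul one x = x ∧ mul x one = x)
    (hdiv : ∀ a : A, a ≠ 0 →
      Function.Bijective (fun x => mul a x) ∧ Function.Bijective (fun x => mul x a))
    (hproper : Set.range (fun s : k => s • one) ⊂ rightNucleusSet mul)
    (ι : ℓ →ₗ[k] A) (hinj : Function.Injective ι) (hι1 : ι 1 = one)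
    (hιmul : ∀ x y : ℓ, ι (x * y) = mul (ι x) (ι y))
    (hnr : Set.range ι ⊆ rightNucleusSet mul)
    (hfix : ∃ α β : A ≃ₗ[k] A, IsKleinPair mul α β ∧ Set.range ι = {x : A | β x = x}) :
    ∃ c : k × k × k, IsAdmissibleTriple σ c ∧
      ∃ φ : ℓ × ℓ → A, Function.Bijective φ ∧
        (∀ p q : ℓ × ℓ, φ (p + q) = φ p + φ q) ∧
        (∀ (t : k) (p : ℓ × ℓ), φ (t • p) = t • φ p) ∧
        (∀ p q : ℓ × ℓ, φ (Amul σ c p q) = mul (φ p) (φ q)) :=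
  exists_admissible_iso_general hchar hquad σ hσ A mul one h4 hone hdiv ι hinj hι1 hιmul hnr hfix
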